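/- arXiv:2211.13353 — 2 statements merged into one kernel-verified Lean document; each statement's English description precedes it below -/
import Mathlib

section
/- Under the hypotheses of the previous setting (bipartite biregular, degrees d₁, d₂ ≥ 2, 0 ≤ α < 1), the non-backtracking dual vector ŷ = ((1−α)/n)(I − αBᵀ(D̂−I)⁻¹)⁻¹ TᵀD⁻¹𝟏 is constant on each block of directed edges: ŷ equals (d₂ + α d₁)/(n d₁ d₂ (1+α)) on edges starting in part 1 and (d₁ + α d₂)/(n d₁ d₂ (1+α)) on edges starting in part 2. -/
open Matrix SimpleGraph

/-- Primal-to-dual matrix: `T x (u,v) = 1` iff `x = u`. -/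
def Tmat {V : Type*} [Fintype V] [DecidableEq V] (G : SimpleGraph V) [DecidableRel G.Adj] :
    Matrix V G.Dart ℝ :=
  fun x d => if d.toProd.1 = x then 1 else 0

/-- Non-backtracking matrix: `B (u,v) (x,y) = 1` iff `v = x` and `u ≠ y`. -/
def Bmat {V : Type*} [Fintype V] [DecidableEq V] (G : SimpleGraph V) [DecidableRel G.Adj] :
    Matrix G.Dart G.Dart ℝ :=
  fun d e => if d.toProd.2 = e.toProd.1 ∧ d.toProd.1 ≠ e.toProd.2 then 1 else 0

/-- Vertex degree matrix of `G`. -/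
def Dmat {V : Type*} [Fintype V] [DecidableEq V] (G : SimpleGraph V) [DecidableRel G.Adj] :
    Matrix V V ℝ :=
  Matrix.diagonal fun v => (G.degree v : ℝ)

/-- Edge-degree matrix: diagonal, entry at dart `(u,v)` is `deg v`. -/
def Dhat {V : Type*} [Fintype V] [DecidableEq V] (G : SimpleGraph V) [DecidableRel G.Adj] :
    Matrix G.Dart G.Dart ℝ :=
  Matrix.diagonal fun d => (G.degree d.toProd.2 : ℝ)

section Aux

variable {V : Type*} [Fintype V] [DecidableEq V] {G : SimpleGraph V} [DecidableRel G.Adj]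

lemma dart_snd_fiber_card (u : V) :
    (Finset.univ.filter (fun e : G.Dart => e.toProd.2 = u)).card = G.degree u := by
  rw [← G.dart_fst_fiber_card_eq_degree u]
  apply Finset.card_bij' (fun e _ => e.symm) (fun e _ => e.symm) <;>
    intro e he <;> simp_all

lemma dart_eq_symm_iff (d e : G.Dart) :
    (e.toProd.2 = d.toProd.1 ∧ e.toProd.1 = d.toProd.2) ↔ e = d.symm := by
  constructor
  · rintro ⟨h2, h1⟩
    apply Dart.ext
    simp only [Dart.symm_toProd, Prod.swap]
    exact Prod.ext h1 h2
  · rintro rfl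
    simp [Dart.symm_toProd]

lemma sum_nb (d : G.Dart) (f : G.Dart → ℝ) :
    ∑ e : G.Dart, (if e.toProd.2 = d.toProd.1 ∧ e.toProd.1 ≠ d.toProd.2 then f e else 0)
      = (∑ e : G.Dart, if e.toProd.2 = d.toProd.1 then f e else 0) - f d.symm := by
  have h1 : ∑ e : G.Dart, (if e.toProd.2 = d.toProd.1 ∧ e.toProd.1 = d.toProd.2 then f e else 0)
      = f d.symm := by
    have : ∀ e : G.Dart,
        (if e.toProd.2 = d.toProd.1 ∧ e.toProd.1 = d.toProd.2 then f e else 0)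
          = (if e = d.symm then f e else 0) := fun e => by
      simp only [dart_eq_symm_iff]
    simp only [this]
    simp
  rw [eq_sub_iff_add_eq, ← h1, ← Finset.sum_add_distrib]
  apply Finset.sum_congr rfl
  intro e _
  by_cases h2 : e.toProd.2 = d.toProd.1
  · by_cases h1' : e.toProd.1 = d.toProd.2 <;> simp [h2, h1']
  · simp [h2]

lemma sum_fiber_const (u : V) (c : ℝ) (f : G.Dart → ℝ)
    (hf : ∀ e : G.Dart, e.toProd.2 = u → f e = c) :
    ∑ e : G.Dart, (if e.toProd.2 = u then f e else 0) = (G.degree u : ℝ) * c := by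
  rw [← Finset.sum_filter]
  rw [Finset.sum_congr rfl (fun e he => hf e (Finset.mem_filter.mp he).2)]
  rw [Finset.sum_const, dart_snd_fiber_card, nsmul_eq_mul]

lemma Mentry (h : ∀ v : V, ((G.degree v : ℝ) - 1) ≠ 0) (d e : G.Dart) :
    ((Bmat G)ᵀ * (Dhat G - 1)⁻¹) d e =
      if e.toProd.2 = d.toProd.1 ∧ e.toProd.1 ≠ d.toProd.2 then
        ((G.degree e.toProd.2 : ℝ) - 1)⁻¹ else 0 := by
  have hD : (Dhat G - 1 : Matrix G.Dart G.Dart ℝ)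
      = Matrix.diagonal (fun e : G.Dart => (G.degree e.toProd.2 : ℝ) - 1) := by
    rw [Dhat, ← Matrix.diagonal_one, Matrix.diagonal_sub]
  have hinv : (Dhat G - 1)⁻¹
      = Matrix.diagonal (fun e : G.Dart => ((G.degree e.toProd.2 : ℝ) - 1)⁻¹) := by
    rw [hD]
    apply Matrix.inv_eq_right_inv
    rw [Matrix.diagonal_mul_diagonal]
    have h2 : (fun i : G.Dart => ((G.degree i.toProd.2 : ℝ) - 1) * ((G.degree i.toProd.2 : ℝ) - 1)⁻¹)
        = fun _ => 1 := funext fun i => mul_inv_cancel₀ (h _)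
    rw [h2, Matrix.diagonal_one]
  rw [hinv, Matrix.mul_diagonal, Matrix.transpose_apply, Bmat]
  simp [ite_mul]

end Aux

/-- For a connected bipartite biregular graph with part degrees `d₁, d₂ ≥ 2` and `0 ≤ α < 1`,
the non-backtracking dual vector
`ŷ = ((1-α)/n)(I - αBᵀ(D̂ - I)⁻¹)⁻¹ Tᵀ D⁻¹ 𝟏` is constant on each block of directed edges:
it equals `(d₂ + α d₁)/(n d₁ d₂ (1+α))` on darts starting in part 1 and
`(d₁ + α d₂)/(n d₁ d₂ (1+α))` on darts starting in part 2. -/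
theorem stmt_10 {V : Type*} [Fintype V] [DecidableEq V] (G : SimpleGraph V)
    [DecidableRel G.Adj] (p : V → Prop) [DecidablePred p] (d₁ d₂ : ℕ)
    (hcon : G.Connected)
    (hbip : ∀ v w, G.Adj v w → (p v ↔ ¬ p w))
    (hdeg1 : ∀ v, p v → G.degree v = d₁)
    (hdeg2 : ∀ v, ¬ p v → G.degree v = d₂)
    (hd₁ : 2 ≤ d₁) (hd₂ : 2 ≤ d₂)
    (α : ℝ) (hα0 : 0 ≤ α) (hα1 : α < 1) (n : ℕ) (hn : n = Fintype.card V)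
    (yhat : G.Dart → ℝ)
    (hy : yhat = ((1 - α) / n) •
      ((1 - α • ((Bmat G)ᵀ * (Dhat G - 1)⁻¹))⁻¹ *ᵥ
        ((Tmat G)ᵀ *ᵥ ((Dmat G)⁻¹ *ᵥ (fun _ => (1 : ℝ)))))) :
    ∀ e : G.Dart,
      (p e.toProd.1 → yhat e = ((d₂ : ℝ) + α * d₁) / (n * d₁ * d₂ * (1 + α))) ∧
      (¬ p e.toProd.1 → yhat e = ((d₁ : ℝ) + α * d₂) / (n * d₁ * d₂ * (1 + α))) := by
  haveI : Nonempty V := hcon.nonempty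
  have hn0 : (n : ℝ) ≠ 0 := by
    rw [hn]
    exact_mod_cast Fintype.card_ne_zero
  have hd₁R : (0 : ℝ) < d₁ := by exact_mod_cast (by omega : 0 < d₁)
  have hd₂R : (0 : ℝ) < d₂ := by exact_mod_cast (by omega : 0 < d₂)
  have hd₁0 : (d₁ : ℝ) ≠ 0 := hd₁R.ne'
  have hd₂0 : (d₂ : ℝ) ≠ 0 := hd₂R.ne'
  have hα1' : (1 : ℝ) + α ≠ 0 := by nlinarith
  -- every vertex has degree ≥ 2
  have hdeg : ∀ v : V, 2 ≤ G.degree v := by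
    intro v
    by_cases hv : p v
    · rw [hdeg1 v hv]; exact hd₁
    · rw [hdeg2 v hv]; exact hd₂
  have hdegR : ∀ v : V, ((G.degree v : ℝ) - 1) ≠ 0 := by
    intro v
    have := hdeg v
    have : (2 : ℝ) ≤ (G.degree v : ℝ) := by exact_mod_cast this
    linarith
  have hgpos : ∀ v : V, (0 : ℝ) ≤ ((G.degree v : ℝ) - 1)⁻¹ := by
    intro v
    have h2 : (2 : ℝ) ≤ (G.degree v : ℝ) := by exact_mod_cast hdeg v
    have : (0 : ℝ) ≤ (G.degree v : ℝ) - 1 := by linarith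
    exact inv_nonneg.mpr this
  set M := (Bmat G)ᵀ * (Dhat G - 1)⁻¹ with hM
  set A := (1 : Matrix G.Dart G.Dart ℝ) - α • M with hA
  have hMv : ∀ (v : G.Dart → ℝ) (d : G.Dart),
      (M *ᵥ v) d = ∑ e : G.Dart, (if e.toProd.2 = d.toProd.1 ∧ e.toProd.1 ≠ d.toProd.2 then
        ((G.degree e.toProd.2 : ℝ) - 1)⁻¹ * v e else 0) := by
    intro v d
    have h0 : (M *ᵥ v) d = ∑ e : G.Dart, M d e * v e := rfl
    rw [h0]
    apply Finset.sum_congr rfl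
    intro e _
    rw [hM, Mentry hdegR, ite_mul, zero_mul]
  -- action of M on part-constant vectors
  have hMconst : ∀ (c₁ c₂ : ℝ) (d : G.Dart),
      (M *ᵥ (fun e : G.Dart => if p e.toProd.1 then c₁ else c₂)) d
        = (if p d.toProd.1 then c₂ else c₁) := by
    intro c₁ c₂ d
    set c : ℝ := if p d.toProd.1 then c₂ else c₁ with hc
    have hz : ∀ e : G.Dart, e.toProd.2 = d.toProd.1 →
        (if p e.toProd.1 then c₁ else c₂) = c := by
      intro e he
      have hadj : G.Adj e.toProd.1 d.toProd.1 := he ▸ e.adj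
      have := hbip _ _ hadj
      by_cases hd : p d.toProd.1
      · rw [if_neg (fun h' => (this.mp h') hd), hc, if_pos hd]
      · rw [if_pos (this.mpr hd), hc, if_neg hd]
    have hf : ∀ e : G.Dart, e.toProd.2 = d.toProd.1 →
        ((G.degree e.toProd.2 : ℝ) - 1)⁻¹ * (if p e.toProd.1 then c₁ else c₂)
          = ((G.degree d.toProd.1 : ℝ) - 1)⁻¹ * c := by
      intro e he
      rw [he, hz e he]
    rw [hMv, sum_nb d (fun e => ((G.degree e.toProd.2 : ℝ) - 1)⁻¹ *
        (if p e.toProd.1 then c₁ else c₂)),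
      sum_fiber_const d.toProd.1 (((G.degree d.toProd.1 : ℝ) - 1)⁻¹ * c) _ hf,
      hf d.symm (by simp)]
    have h0 : ((G.degree d.toProd.1 : ℝ) - 1) ≠ 0 := hdegR _
    field_simp [h0]
  -- A applied to part-constant vectors
  have hAv : ∀ v : G.Dart → ℝ, A *ᵥ v = v - α • (M *ᵥ v) := by
    intro v
    rw [hA, Matrix.sub_mulVec, Matrix.one_mulVec, Matrix.smul_mulVec]
  -- injectivity of A
  have hinj : Function.Injective A.mulVec := by
    intro x y hxy
    by_cases hne : Nonempty G.Dart
    swap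
    · funext e; exact absurd ⟨e⟩ hne
    set u : G.Dart → ℝ := x - y with hu
    have hu0 : A *ᵥ u = 0 := by
      rw [hu, Matrix.mulVec_sub, hxy, sub_self]
    have hueq : ∀ d : G.Dart, u d = α * (M *ᵥ u) d := by
      intro d
      have h1 := congrFun hu0 d
      rw [hAv] at h1
      have h2 : u d - α * (M *ᵥ u) d = 0 := h1
      linarith
    obtain ⟨d₀, _, hd₀⟩ := Finset.exists_max_image Finset.univ (fun e => |u e|)
      ⟨Classical.arbitrary _, Finset.mem_univ _⟩
    set C : ℝ := |u d₀| with hC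
    have hbound : ∀ d : G.Dart, |(M *ᵥ u) d| ≤ C := by
      intro d
      have hconst : (M *ᵥ (fun _ : G.Dart => C)) d = C := by
        have h3 := hMconst C C d
        simpa [ite_self] using h3
      rw [hMv] at hconst ⊢
      calc |∑ e : G.Dart, (if e.toProd.2 = d.toProd.1 ∧ e.toProd.1 ≠ d.toProd.2 then
              ((G.degree e.toProd.2 : ℝ) - 1)⁻¹ * u e else 0)|
          ≤ ∑ e : G.Dart, |(if e.toProd.2 = d.toProd.1 ∧ e.toProd.1 ≠ d.toProd.2 then
              ((G.degree e.toProd.2 : ℝ) - 1)⁻¹ * u e else 0)| :=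
            Finset.abs_sum_le_sum_abs _ _
        _ ≤ ∑ e : G.Dart, (if e.toProd.2 = d.toProd.1 ∧ e.toProd.1 ≠ d.toProd.2 then
              ((G.degree e.toProd.2 : ℝ) - 1)⁻¹ * C else 0) := by
            apply Finset.sum_le_sum
            intro e _
            by_cases hcond : e.toProd.2 = d.toProd.1 ∧ e.toProd.1 ≠ d.toProd.2
            · rw [if_pos hcond, if_pos hcond, abs_mul, abs_of_nonneg (hgpos _)]
              exact mul_le_mul_of_nonneg_left (hd₀ e (Finset.mem_univ e)) (hgpos _)
            · rw [if_neg hcond, if_neg hcond, abs_zero]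
        _ = C := hconst
    have hC0 : C = 0 := by
      have h4 : C ≤ α * C := by
        calc C = |u d₀| := rfl
          _ = |α * (M *ᵥ u) d₀| := by rw [← hueq]
          _ = α * |(M *ᵥ u) d₀| := by rw [abs_mul, abs_of_nonneg hα0]
          _ ≤ α * C := mul_le_mul_of_nonneg_left (hbound d₀) hα0
      have hCnn : 0 ≤ C := abs_nonneg _
      nlinarith
    have : u = 0 := by
      funext e
      have := hd₀ e (Finset.mem_univ e)
      have : |u e| ≤ 0 := hC0 ▸ this
      have := abs_nonneg (u e)
      have heq : |u e| = 0 := le_antisymm ‹|u e| ≤ 0› this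
      exact abs_eq_zero.mp heq
    have := sub_eq_zero.mp (by rw [← hu]; exact this : x - y = 0)
    exact this
  have hAU : IsUnit A := Matrix.mulVec_injective_iff_isUnit.mp hinj
  -- the right-hand side vector
  have hDinv : (Dmat G)⁻¹ = Matrix.diagonal (fun v : V => (G.degree v : ℝ)⁻¹) := by
    apply Matrix.inv_eq_right_inv
    rw [Dmat, Matrix.diagonal_mul_diagonal]
    have h2 : (fun v : V => (G.degree v : ℝ) * (G.degree v : ℝ)⁻¹) = fun _ => 1 := by
      funext v
      have : (G.degree v : ℝ) ≠ 0 := by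
        have h2 : (2 : ℝ) ≤ (G.degree v : ℝ) := by exact_mod_cast hdeg v
        linarith
      exact mul_inv_cancel₀ this
    rw [h2, Matrix.diagonal_one]
  have hw : (Tmat G)ᵀ *ᵥ ((Dmat G)⁻¹ *ᵥ (fun _ => (1 : ℝ)))
      = fun d : G.Dart => (G.degree d.toProd.1 : ℝ)⁻¹ := by
    funext d
    have h1 : ((Dmat G)⁻¹ *ᵥ (fun _ => (1 : ℝ))) = fun v : V => (G.degree v : ℝ)⁻¹ := by
      funext v
      rw [hDinv, Matrix.mulVec_diagonal, mul_one]
    rw [h1]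
    have h2 : ((Tmat G)ᵀ *ᵥ fun v : V => (G.degree v : ℝ)⁻¹) d
        = ∑ x : V, (if d.toProd.1 = x then 1 else 0) * (G.degree x : ℝ)⁻¹ := rfl
    rw [h2]
    simp [ite_mul]
  -- the candidate vector
  set c₁ : ℝ := ((d₂ : ℝ) + α * d₁) / (n * d₁ * d₂ * (1 + α)) with hc₁
  set c₂ : ℝ := ((d₁ : ℝ) + α * d₂) / (n * d₁ * d₂ * (1 + α)) with hc₂
  set z : G.Dart → ℝ := fun e => if p e.toProd.1 then c₁ else c₂ with hz
  have hAz : A *ᵥ z = ((1 - α) / n) • ((Tmat G)ᵀ *ᵥ ((Dmat G)⁻¹ *ᵥ (fun _ => (1 : ℝ)))) := by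
    rw [hAv, hw]
    funext d
    have h1 : (M *ᵥ z) d = (if p d.toProd.1 then c₂ else c₁) := hMconst c₁ c₂ d
    have h2 : (z - α • (M *ᵥ z)) d = z d - α * (M *ᵥ z) d := rfl
    rw [h2, h1]
    have h3 : (((1 - α) / ↑n) • fun d : G.Dart => (G.degree d.toProd.1 : ℝ)⁻¹) d
        = ((1 - α) / n) * (G.degree d.toProd.1 : ℝ)⁻¹ := rfl
    rw [h3]
    have hzd : z d = if p d.toProd.1 then c₁ else c₂ := rfl
    rw [hzd]
    by_cases hd : p d.toProd.1
    · rw [if_pos hd, if_pos hd, hdeg1 _ hd, hc₁, hc₂]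
      field_simp
      ring
    · rw [if_neg hd, if_neg hd, hdeg2 _ hd, hc₁, hc₂]
      field_simp
      ring
  have hyz : yhat = z := by
    rw [hy, ← Matrix.mulVec_smul, ← hAz, Matrix.mulVec_mulVec,
      Matrix.nonsing_inv_mul A (Matrix.isUnit_iff_isUnit_det A |>.mp hAU), Matrix.one_mulVec]
  intro e
  constructor
  · intro he
    rw [hyz]
    exact if_pos he
  · intro he
    rw [hyz]
    exact if_neg he
end

section
/- For a connected bipartite biregular graph with degrees d₁, d₂ ≥ 2 and 0 ≤ α < 1, the projected non-backtracking PageRank equals the standard PageRank: T ŷ = x, where ŷ = ((1−α)/n)(I − αBᵀ(D̂−I)⁻¹)⁻¹TᵀD⁻¹𝟏 and x = ((1−α)/n)(I − αAᵀD⁻¹)⁻¹𝟏. -/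
open Matrix SimpleGraph

lemma aux_isUnit_row {m : Type*} [Fintype m] [DecidableEq m]
    (P : Matrix m m ℝ) {α : ℝ} (hα0 : 0 ≤ α) (hα1 : α < 1)
    (hP : ∀ i, ∑ j, |P i j| ≤ 1) : IsUnit (1 - α • P) := by
  rw [← Matrix.mulVec_injective_iff_isUnit]
  have key : ∀ u : m → ℝ, (1 - α • P) *ᵥ u = 0 → u = 0 := by
    intro u hu
    by_contra hne
    obtain ⟨k, hk⟩ := Function.ne_iff.mp hne
    obtain ⟨i, -, hi⟩ := Finset.exists_max_image Finset.univ (fun j => |u j|)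
      ⟨k, Finset.mem_univ k⟩
    have hipos : 0 < |u i| := lt_of_lt_of_le (abs_pos.mpr hk) (hi k (Finset.mem_univ k))
    have heq : u i = α * ∑ j, P i j * u j := by
      have h0 := congrFun hu i
      simp only [Matrix.sub_mulVec, Matrix.smul_mulVec, Matrix.one_mulVec, Pi.sub_apply,
        Pi.smul_apply, Pi.zero_apply, smul_eq_mul, sub_eq_zero] at h0
      simp only [Matrix.mulVec, dotProduct] at h0
      rw [h0]
    have hle : |u i| ≤ α * |u i| := by
      calc |u i| = |α * ∑ j, P i j * u j| := by rw [heq]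
        _ = α * |∑ j, P i j * u j| := by rw [abs_mul, abs_of_nonneg hα0]
        _ ≤ α * ∑ j, |P i j * u j| :=
            mul_le_mul_of_nonneg_left (Finset.abs_sum_le_sum_abs _ _) hα0
        _ ≤ α * ∑ j, |P i j| * |u i| := by
            apply mul_le_mul_of_nonneg_left _ hα0
            apply Finset.sum_le_sum
            intro j _
            rw [abs_mul]
            exact mul_le_mul_of_nonneg_left (hi j (Finset.mem_univ j)) (abs_nonneg _)
        _ = α * ((∑ j, |P i j|) * |u i|) := by rw [Finset.sum_mul]
        _ ≤ α * (1 * |u i|) := by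
            apply mul_le_mul_of_nonneg_left _ hα0
            exact mul_le_mul_of_nonneg_right (hP i) (le_of_lt hipos)
        _ = α * |u i| := by ring
    nlinarith
  intro u v huv
  have : (1 - α • P) *ᵥ (u - v) = 0 := by
    rw [Matrix.mulVec_sub, huv, sub_self]
  exact sub_eq_zero.mp (key _ this)

lemma aux_isUnit_col {m : Type*} [Fintype m] [DecidableEq m]
    (P : Matrix m m ℝ) {α : ℝ} (hα0 : 0 ≤ α) (hα1 : α < 1)
    (hP : ∀ j, ∑ i, |P i j| ≤ 1) : IsUnit (1 - α • P) := by
  rw [← Matrix.isUnit_transpose]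
  have : (1 - α • P)ᵀ = 1 - α • Pᵀ := by
    rw [Matrix.transpose_sub, Matrix.transpose_one, Matrix.transpose_smul]
  rw [this]
  exact aux_isUnit_row Pᵀ hα0 hα1 (fun i => hP i)

/-- For a connected bipartite biregular graph with part degrees `d₁, d₂ ≥ 2` and `0 ≤ α < 1`,
the projected non-backtracking PageRank equals the standard PageRank: `T ŷ = x`, where
`ŷ = ((1-α)/n)(I - αBᵀ(D̂ - I)⁻¹)⁻¹ Tᵀ D⁻¹ 𝟏` and `x = ((1-α)/n)(I - αAᵀD⁻¹)⁻¹ 𝟏`. -/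
theorem stmt_11 {V : Type*} [Fintype V] [DecidableEq V] (G : SimpleGraph V)
    [DecidableRel G.Adj] (p : V → Prop) [DecidablePred p] (d₁ d₂ : ℕ)
    (hcon : G.Connected)
    (hbip : ∀ v w, G.Adj v w → (p v ↔ ¬ p w))
    (hdeg1 : ∀ v, p v → G.degree v = d₁)
    (hdeg2 : ∀ v, ¬ p v → G.degree v = d₂)
    (hd₁ : 2 ≤ d₁) (hd₂ : 2 ≤ d₂)
    (α : ℝ) (hα0 : 0 ≤ α) (hα1 : α < 1) (n : ℕ) (hn : n = Fintype.card V)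
    (yhat : G.Dart → ℝ) (x : V → ℝ)
    (hy : yhat = ((1 - α) / n) •
      ((1 - α • ((Bmat G)ᵀ * (Dhat G - 1)⁻¹))⁻¹ *ᵥ
        ((Tmat G)ᵀ *ᵥ ((Dmat G)⁻¹ *ᵥ (fun _ => (1 : ℝ))))))
    (hx : x = ((1 - α) / n) •
      ((1 - α • ((G.adjMatrix ℝ)ᵀ * (Dmat G)⁻¹))⁻¹ *ᵥ (fun _ => (1 : ℝ)))) :
    Tmat G *ᵥ yhat = x := by
  classical
  -- basic degree facts
  have hdegpos : ∀ v, 2 ≤ G.degree v := by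
    intro v
    by_cases h : p v
    · rw [hdeg1 v h]; exact hd₁
    · rw [hdeg2 v h]; exact hd₂
  have hd2R : ∀ v, (2 : ℝ) ≤ (G.degree v : ℝ) := fun v => by exact_mod_cast hdegpos v
  have hdne : ∀ v, (G.degree v : ℝ) ≠ 0 := fun v => by have := hd2R v; linarith
  have hdm1 : ∀ v, (G.degree v : ℝ) - 1 ≠ 0 := fun v => by have := hd2R v; linarith
  have hdm1nn : ∀ v, 0 ≤ ((G.degree v : ℝ) - 1)⁻¹ := fun v => by
    have := hd2R v
    have : (0:ℝ) ≤ (G.degree v : ℝ) - 1 := by linarith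
    positivity
  have hd1ne : (d₁ : ℝ) ≠ 0 := by
    have : (2:ℝ) ≤ (d₁:ℝ) := by exact_mod_cast hd₁
    linarith
  have hd2ne : (d₂ : ℝ) ≠ 0 := by
    have : (2:ℝ) ≤ (d₂:ℝ) := by exact_mod_cast hd₂
    linarith
  have hβ : (1:ℝ) - α^2 ≠ 0 := by nlinarith
  -- the explicit solution constants
  set a : ℝ := (1/(d₁:ℝ) + α/(d₂:ℝ))/(1-α^2) with ha
  set b : ℝ := (1/(d₂:ℝ) + α/(d₁:ℝ))/(1-α^2) with hb
  have hab1 : a - α*b = 1/(d₁:ℝ) := by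
    rw [ha, hb]; field_simp; ring
  have hab2 : b - α*a = 1/(d₂:ℝ) := by
    rw [ha, hb]; field_simp; ring
  -- matrices and vectors
  set M := (1 : Matrix G.Dart G.Dart ℝ) - α • ((Bmat G)ᵀ * (Dhat G - 1)⁻¹) with hMdef
  set N := (1 : Matrix V V ℝ) - α • ((G.adjMatrix ℝ)ᵀ * (Dmat G)⁻¹) with hNdef
  set w : G.Dart → ℝ := fun d => if p d.toProd.1 then a else b with hwdef
  set x' : V → ℝ := fun v => (G.degree v : ℝ) * (if p v then a else b) with hx'def
  -- diagonal inverses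
  have hDinv : (Dmat G)⁻¹ = Matrix.diagonal (fun v => ((G.degree v : ℝ))⁻¹) := by
    apply Matrix.inv_eq_right_inv
    rw [Dmat, Matrix.diagonal_mul_diagonal, ← Matrix.diagonal_one]
    exact congrArg Matrix.diagonal (funext fun v => mul_inv_cancel₀ (hdne v))
  have hDhat : Dhat G - 1 = Matrix.diagonal (fun d : G.Dart => (G.degree d.toProd.2 : ℝ) - 1) := by
    rw [Dhat, ← Matrix.diagonal_one, Matrix.diagonal_sub]
  have hDhatinv : (Dhat G - 1)⁻¹ =
      Matrix.diagonal (fun d : G.Dart => ((G.degree d.toProd.2 : ℝ) - 1)⁻¹) := by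
    apply Matrix.inv_eq_right_inv
    rw [hDhat, Matrix.diagonal_mul_diagonal, ← Matrix.diagonal_one]
    exact congrArg Matrix.diagonal (funext fun d => mul_inv_cancel₀ (hdm1 _))
  -- counting darts into the head of d avoiding its tail
  have hcard1 : ∀ d : G.Dart,
      (Finset.univ.filter
        (fun e : G.Dart => e.toProd.2 = d.toProd.1 ∧ e.toProd.1 ≠ d.toProd.2)).card
        = G.degree d.toProd.1 - 1 := by
    intro d
    have hmem : d.toProd.2 ∈ G.neighborFinset d.toProd.1 := by
      rw [SimpleGraph.mem_neighborFinset]; exact d.adj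
    have hbij : (Finset.univ.filter
        (fun e : G.Dart => e.toProd.2 = d.toProd.1 ∧ e.toProd.1 ≠ d.toProd.2)).card
        = ((G.neighborFinset d.toProd.1).erase d.toProd.2).card := by
      apply Finset.card_bij (fun e _ => e.toProd.1)
      · intro e he
        simp only [Finset.mem_filter, Finset.mem_univ, true_and] at he
        rw [Finset.mem_erase, SimpleGraph.mem_neighborFinset]
        exact ⟨he.2, he.1 ▸ e.adj.symm⟩
      · intro e he f hf h
        simp only [Finset.mem_filter, Finset.mem_univ, true_and] at he hf
        exact SimpleGraph.Dart.ext _ _ (Prod.ext h (he.1.trans hf.1.symm))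
      · intro u hu
        rw [Finset.mem_erase, SimpleGraph.mem_neighborFinset] at hu
        refine ⟨⟨(u, d.toProd.1), hu.2.symm⟩, ?_, rfl⟩
        simp only [Finset.mem_filter, Finset.mem_univ, true_and]
        exact hu.1
    rw [hbij, Finset.card_erase_of_mem hmem, SimpleGraph.card_neighborFinset_eq_degree]
  -- generic sum over darts supported on that filter
  have hsum1 : ∀ (d : G.Dart) (F : G.Dart → ℝ) (c : ℝ),
      (∀ e : G.Dart, F e =
        if e.toProd.2 = d.toProd.1 ∧ e.toProd.1 ≠ d.toProd.2 then c else 0) →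
      ∑ e, F e = ((G.degree d.toProd.1 : ℝ) - 1) * c := by
    intro d F c hF
    have h1 : (1:ℕ) ≤ G.degree d.toProd.1 := le_trans one_le_two (hdegpos _)
    calc ∑ e, F e
        = ∑ e ∈ Finset.univ.filter
            (fun e : G.Dart => e.toProd.2 = d.toProd.1 ∧ e.toProd.1 ≠ d.toProd.2), c := by
          rw [Finset.sum_filter]
          exact Finset.sum_congr rfl fun e _ => hF e
      _ = ((G.degree d.toProd.1 - 1 : ℕ) : ℝ) * c := by
          rw [Finset.sum_const, hcard1 d, nsmul_eq_mul]
      _ = ((G.degree d.toProd.1 : ℝ) - 1) * c := by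
          rw [Nat.cast_sub h1, Nat.cast_one]
  -- sum over neighbors
  have hadjsum : ∀ (v : V) (c : ℝ),
      (∑ u, if G.Adj v u then c else 0) = (G.degree v : ℝ) * c := by
    intro v c
    rw [← Finset.sum_filter]
    rw [show Finset.univ.filter (fun u => G.Adj v u) = G.neighborFinset v from
      (SimpleGraph.neighborFinset_eq_filter G).symm]
    rw [Finset.sum_const, SimpleGraph.card_neighborFinset_eq_degree, nsmul_eq_mul]
  -- dart fiber over fst
  have hfib : ∀ v : V,
      (Finset.univ.filter (fun e : G.Dart => e.toProd.1 = v)).card = G.degree v := by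
    intro v
    rw [← SimpleGraph.dart_fst_fiber_card_eq_degree G v]
  -- the entries of the non-backtracking walk matrix
  have hQ : ∀ d e : G.Dart, ((Bmat G)ᵀ * (Dhat G - 1)⁻¹) d e =
      if e.toProd.2 = d.toProd.1 ∧ e.toProd.1 ≠ d.toProd.2 then
        ((G.degree d.toProd.1 : ℝ) - 1)⁻¹ else 0 := by
    intro d e
    rw [hDhatinv, Matrix.mul_diagonal, Matrix.transpose_apply, Bmat]
    by_cases hcond : e.toProd.2 = d.toProd.1 ∧ e.toProd.1 ≠ d.toProd.2
    · rw [if_pos hcond, if_pos hcond, one_mul, hcond.1]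
    · rw [if_neg hcond, if_neg hcond, zero_mul]
  -- M *ᵥ w equals Tᵀ D⁻¹ 1
  have hMw : M *ᵥ w = (Tmat G)ᵀ *ᵥ ((Dmat G)⁻¹ *ᵥ (fun _ => (1:ℝ))) := by
    funext d
    have hRHS : ((Tmat G)ᵀ *ᵥ ((Dmat G)⁻¹ *ᵥ (fun _ => (1:ℝ)))) d
        = ((G.degree d.toProd.1 : ℝ))⁻¹ := by
      rw [hDinv]
      simp [Matrix.mulVec, dotProduct, Tmat, Matrix.transpose_apply,
        Matrix.diagonal_apply, ite_mul, mul_ite]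
    have hterm : ∀ e : G.Dart, ((Bmat G)ᵀ * (Dhat G - 1)⁻¹) d e * w e =
        if e.toProd.2 = d.toProd.1 ∧ e.toProd.1 ≠ d.toProd.2 then
          ((G.degree d.toProd.1 : ℝ) - 1)⁻¹ * (if p d.toProd.1 then b else a) else 0 := by
      intro e
      rw [hQ d e]
      by_cases hcond : e.toProd.2 = d.toProd.1 ∧ e.toProd.1 ≠ d.toProd.2
      · rw [if_pos hcond, if_pos hcond]
        have hadj : G.Adj e.toProd.1 d.toProd.1 := hcond.1 ▸ e.adj
        have hpe := hbip _ _ hadj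
        have hwe : w e = if p d.toProd.1 then b else a := by
          by_cases hpd : p d.toProd.1 <;> simp [hwdef, hpd, hpe]
        rw [hwe]
      · rw [if_neg hcond, if_neg hcond, zero_mul]
    have hLHS : (M *ᵥ w) d = w d - α * (((G.degree d.toProd.1 : ℝ) - 1) *
        (((G.degree d.toProd.1 : ℝ) - 1)⁻¹ * (if p d.toProd.1 then b else a))) := by
      rw [hMdef]
      simp only [Matrix.sub_mulVec, Matrix.smul_mulVec, Matrix.one_mulVec, Pi.sub_apply,
        Pi.smul_apply, smul_eq_mul]
      congr 1
      congr 1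
      simp only [Matrix.mulVec, dotProduct]
      exact hsum1 d _ _ hterm
    rw [hLHS, hRHS, mul_inv_cancel_left₀ (hdm1 _)]
    by_cases hpd : p d.toProd.1
    · rw [if_pos hpd]
      have : w d = a := by simp [hwdef, hpd]
      rw [this, hdeg1 _ hpd, ← one_div]
      linarith [hab1]
    · rw [if_neg hpd]
      have : w d = b := by simp [hwdef, hpd]
      rw [this, hdeg2 _ hpd, ← one_div]
      linarith [hab2]
  -- N *ᵥ x' = 1
  have hNx : N *ᵥ x' = (fun _ => (1:ℝ)) := by
    funext v
    have hterm : ∀ u : V, ((G.adjMatrix ℝ)ᵀ * (Dmat G)⁻¹) v u * x' u =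
        if G.Adj v u then (if p v then b else a) else 0 := by
      intro u
      rw [hDinv, Matrix.mul_diagonal, Matrix.transpose_apply, SimpleGraph.adjMatrix_apply]
      by_cases hadj : G.Adj u v
      · rw [if_pos hadj, if_pos hadj.symm, one_mul]
        have hpu := hbip u v hadj
        have hxu : x' u = (G.degree u : ℝ) * (if p v then b else a) := by
          by_cases hpv : p v <;> simp [hx'def, hpv, hpu]
        rw [hxu, ← mul_assoc, inv_mul_cancel₀ (hdne u), one_mul]
      · rw [if_neg hadj, if_neg (fun h => hadj h.symm), zero_mul, zero_mul]
    have hLHS : (N *ᵥ x') v = x' v - α * ((G.degree v : ℝ) * (if p v then b else a)) := by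
      rw [hNdef]
      simp only [Matrix.sub_mulVec, Matrix.smul_mulVec, Matrix.one_mulVec, Pi.sub_apply,
        Pi.smul_apply, smul_eq_mul]
      congr 1
      congr 1
      simp only [Matrix.mulVec, dotProduct]
      rw [Finset.sum_congr rfl (fun u _ => hterm u), hadjsum]
    rw [hLHS]
    by_cases hpv : p v
    · rw [if_pos hpv]
      have : x' v = (G.degree v : ℝ) * a := by simp [hx'def, hpv]
      rw [this, hdeg1 _ hpv]
      have : (d₁:ℝ) * a - α * ((d₁:ℝ) * b) = (d₁:ℝ) * (a - α * b) := by ring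
      rw [this, hab1]
      field_simp
    · rw [if_neg hpv]
      have : x' v = (G.degree v : ℝ) * b := by simp [hx'def, hpv]
      rw [this, hdeg2 _ hpv]
      have : (d₂:ℝ) * b - α * ((d₂:ℝ) * a) = (d₂:ℝ) * (b - α * a) := by ring
      rw [this, hab2]
      field_simp
  -- T *ᵥ w = x'
  have hTw : Tmat G *ᵥ w = x' := by
    funext v
    have hterm : ∀ e : G.Dart, Tmat G v e * w e =
        if e.toProd.1 = v then (if p v then a else b) else 0 := by
      intro e
      rw [Tmat]
      by_cases he : e.toProd.1 = v
      · rw [if_pos he, if_pos he, one_mul, hwdef]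
        simp only [he]
      · rw [if_neg he, if_neg he, zero_mul]
    have : (Tmat G *ᵥ w) v = ∑ e, Tmat G v e * w e := rfl
    rw [this, Finset.sum_congr rfl (fun e _ => hterm e), ← Finset.sum_filter,
      Finset.sum_const, hfib v, nsmul_eq_mul, hx'def]
  -- invertibility of M
  have hMunit : IsUnit M := by
    rw [hMdef]
    apply aux_isUnit_row _ hα0 hα1
    intro d
    have habs : ∀ e : G.Dart, |((Bmat G)ᵀ * (Dhat G - 1)⁻¹) d e| =
        if e.toProd.2 = d.toProd.1 ∧ e.toProd.1 ≠ d.toProd.2 then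
          ((G.degree d.toProd.1 : ℝ) - 1)⁻¹ else 0 := by
      intro e
      rw [hQ d e]
      by_cases hcond : e.toProd.2 = d.toProd.1 ∧ e.toProd.1 ≠ d.toProd.2
      · rw [if_pos hcond]
        exact abs_of_nonneg (hdm1nn _)
      · rw [if_neg hcond]
        exact abs_zero
    rw [hsum1 d _ _ habs, mul_inv_cancel₀ (hdm1 _)]
  -- invertibility of N
  have hNunit : IsUnit N := by
    rw [hNdef]
    apply aux_isUnit_col _ hα0 hα1
    intro u
    have habs : ∀ v : V, |((G.adjMatrix ℝ)ᵀ * (Dmat G)⁻¹) v u| =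
        if G.Adj u v then ((G.degree u : ℝ))⁻¹ else 0 := by
      intro v
      rw [hDinv, Matrix.mul_diagonal, Matrix.transpose_apply, SimpleGraph.adjMatrix_apply]
      by_cases hadj : G.Adj u v
      · rw [if_pos hadj, if_pos hadj, one_mul, abs_of_nonneg (by positivity)]
      · rw [if_neg hadj, if_neg hadj, zero_mul, abs_zero]
    rw [Finset.sum_congr rfl (fun v _ => habs v), hadjsum, mul_inv_cancel₀ (hdne u)]
  -- invert
  have hMinv : M⁻¹ *ᵥ ((Tmat G)ᵀ *ᵥ ((Dmat G)⁻¹ *ᵥ (fun _ => (1:ℝ)))) = w := by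
    rw [← hMw, Matrix.mulVec_mulVec, Matrix.nonsing_inv_mul M
      ((Matrix.isUnit_iff_isUnit_det M).mp hMunit), Matrix.one_mulVec]
  have hNinv : N⁻¹ *ᵥ (fun _ => (1:ℝ)) = x' := by
    rw [← hNx, Matrix.mulVec_mulVec, Matrix.nonsing_inv_mul N
      ((Matrix.isUnit_iff_isUnit_det N).mp hNunit), Matrix.one_mulVec]
  rw [hy, hx, Matrix.mulVec_smul, hMinv, hTw, hNinv]
end
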